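/- arXiv:2510.24101 — 4 statements merged into one kernel-verified Lean document; each statement's English description precedes it below -/
import Mathlib

section
/- Let β ≥ 1 and k = ⌈log₂(2β)⌉ + 1. Define the row vector g₁ = (⌊(2β+1)/2⌋, ⌊(2β+2)/4⌋, …, ⌊(2β+2^{k-1})/2^k⌋) ∈ ℤ^k. Then an integer a satisfies 0 ≤ a ≤ 2β if and only if there exists a binary vector 𝐚 ∈ {0,1}^k such that g₁ · 𝐚 = a. -/
/-!
Write `B = 2β` and `w B j = ⌊(B + 2^j) / 2^(j+1)⌋`. The first weight is `⌈B/2⌉` and the remaining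
ones are the weights of `⌊B/2⌋`, i.e. `w B (j+1) = w ⌊B/2⌋ j`. By induction, when `B < 2^k` the first
`k` weights sum to `B`, and every `a ≤ B` is a subset sum of them: take the first weight iff
`a > ⌊B/2⌋`, and represent what is left, which is at most `⌊B/2⌋`, by the remaining weights.
-/

open Finset

def lnswWeight (B j : ℕ) : ℕ := (B + 2 ^ j) / 2 ^ (j + 1)

lemma lnswWeight_zero (B : ℕ) : lnswWeight B 0 = (B + 1) / 2 := by
  simp [lnswWeight]

lemma lnswWeight_succ (B j : ℕ) : lnswWeight B (j + 1) = lnswWeight (B / 2) j := by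
  have h : B + 2 ^ (j + 1) = B + 2 ^ j * 2 := by ring
  rw [lnswWeight, lnswWeight, pow_succ 2 (j + 1), Nat.mul_comm, ← Nat.div_div_eq_div_mul, h,
    Nat.add_mul_div_right _ _ two_pos]

lemma natCast_lnswWeight (B j : ℕ) :
    (lnswWeight B j : ℤ) = ((B : ℤ) + 2 ^ j) / 2 ^ (j + 1) := by
  simp [lnswWeight]

lemma sum_lnswWeight {k B : ℕ} (hB : B < 2 ^ k) : ∑ j : Fin k, lnswWeight B j = B := by
  induction k generalizing B with
  | zero => simp_all
  | succ k ih =>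
    rw [Fin.sum_univ_succ]
    simp only [Fin.val_zero, Fin.val_succ, lnswWeight_zero, lnswWeight_succ]
    rw [ih (by rw [pow_succ] at hB; omega)]
    omega

lemma sum_lnswWeight_mul_le {k B : ℕ} (hB : B < 2 ^ k) (v : Fin k → Fin 2) :
    ∑ j : Fin k, lnswWeight B j * (v j : ℕ) ≤ B :=
  calc ∑ j : Fin k, lnswWeight B j * (v j : ℕ)
      ≤ ∑ j : Fin k, lnswWeight B j :=
        sum_le_sum fun j _ =>
          mul_le_of_le_one_right (Nat.zero_le _) (Nat.le_of_lt_succ (v j).isLt)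
    _ = B := sum_lnswWeight hB

lemma sum_lnswWeight_mul_cons {k : ℕ} (B : ℕ) (b : Fin 2) (v : Fin k → Fin 2) :
    ∑ j : Fin (k + 1), lnswWeight B j * ((Fin.cons b v : Fin (k + 1) → Fin 2) j : ℕ) =
      (B + 1) / 2 * b + ∑ j : Fin k, lnswWeight (B / 2) j * (v j : ℕ) := by
  rw [Fin.sum_univ_succ]
  simp only [Fin.cons_zero, Fin.cons_succ, Fin.val_zero, Fin.val_succ, lnswWeight_zero,
    lnswWeight_succ]

lemma exists_sum_lnswWeight_mul_eq {k B a : ℕ} (hB : B < 2 ^ k) (ha : a ≤ B) :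
    ∃ v : Fin k → Fin 2, ∑ j : Fin k, lnswWeight B j * (v j : ℕ) = a := by
  induction k generalizing B a with
  | zero => exact ⟨Fin.elim0, by simp_all⟩
  | succ k ih =>
    have hB' : B / 2 < 2 ^ k := by rw [pow_succ] at hB; omega
    by_cases h : a ≤ B / 2
    · obtain ⟨v, hv⟩ := ih hB' h
      exact ⟨Fin.cons 0 v, by rw [sum_lnswWeight_mul_cons, hv]; simp⟩
    · obtain ⟨v, hv⟩ := ih (a := a - (B + 1) / 2) hB' (by omega)
      exact ⟨Fin.cons 1 v, by rw [sum_lnswWeight_mul_cons, hv]; simp; omega⟩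

theorem lnsw_decomposition_general (β : ℕ) (a : ℤ) :
    (0 ≤ a ∧ a ≤ 2 * (β : ℤ)) ↔
      ∃ v : Fin (Nat.clog 2 (2 * β) + 1) → Fin 2,
        ∑ j : Fin (Nat.clog 2 (2 * β) + 1),
          ((2 * (β : ℤ) + 2 ^ (j : ℕ)) / 2 ^ ((j : ℕ) + 1)) * ((v j : ℕ) : ℤ) = a := by
  have hB : 2 * β < 2 ^ (Nat.clog 2 (2 * β) + 1) :=
    (Nat.le_pow_clog one_lt_two _).trans_lt (Nat.pow_lt_pow_succ one_lt_two)
  have hcast : ∀ j : ℕ, (2 * (β : ℤ) + 2 ^ j) / 2 ^ (j + 1) = lnswWeight (2 * β) j := by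
    intro j; rw [natCast_lnswWeight]; push_cast; rfl
  simp_rw [hcast, ← Nat.cast_mul, ← Nat.cast_sum]
  constructor
  · rintro ⟨h0, h1⟩
    lift a to ℕ using h0
    obtain ⟨v, hv⟩ := exists_sum_lnswWeight_mul_eq hB (a := a) (by omega)
    exact ⟨v, by rw [hv]⟩
  · rintro ⟨v, rfl⟩
    have := sum_lnswWeight_mul_le hB v
    omega

/-- The Ling–Nguyen–Stehlé–Wang decomposition: an integer `a` satisfies
    `0 ≤ a ≤ 2β` iff it is a subset sum of the sequence
    `⌊(2β + 2^{j-1})/2^j⌋`, `j = 1, …, k`, where `k = ⌈log₂(2β)⌉ + 1`. -/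
theorem lnsw_decomposition (β : ℕ) (hβ : 1 ≤ β) (a : ℤ) :
    (0 ≤ a ∧ a ≤ 2 * (β : ℤ)) ↔
      ∃ v : Fin (Nat.clog 2 (2 * β) + 1) → Fin 2,
        ∑ j : Fin (Nat.clog 2 (2 * β) + 1),
          ((2 * (β : ℤ) + 2 ^ (j : ℕ)) / 2 ^ ((j : ℕ) + 1)) * ((v j : ℕ) : ℤ) = a :=
  lnsw_decomposition_general β a
end

section
/- Let q' ≥ 2, m, n positive integers, β ≥ 1 with β ≤ (q'-1)/2, A ∈ ℤ^{m×n} with entries of absolute value at most (q'-1)/2, y ∈ ℤ^m with entries of absolute value at most (q'-1)/2, and x ∈ ℤ^n with ‖x‖_∞ ≤ β. If y ≡ A·x (mod q'), then there exists v ∈ ℤ^m with y = A·x + q'·v (over ℤ) and ‖v‖_∞ ≤ (nβ+1)/2. -/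
/-- Lifting a linear relation mod `q'` to an exact integer relation with a
    bounded carry vector `v`. -/
theorem carry_vector_bound (q' : ℕ) (hq' : 2 ≤ q') (m n : ℕ) (β : ℤ) (hβ : 1 ≤ β)
    (hβq : 2 * β ≤ (q' : ℤ) - 1)
    (A : Matrix (Fin m) (Fin n) ℤ) (y : Fin m → ℤ) (x : Fin n → ℤ)
    (hA : ∀ i j, 2 * |A i j| ≤ (q' : ℤ) - 1)
    (hy : ∀ i, 2 * |y i| ≤ (q' : ℤ) - 1)
    (hx : ∀ j, |x j| ≤ β)
    (hcong : ∀ i, (q' : ℤ) ∣ (y i - A.mulVec x i)) :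
    ∃ v : Fin m → ℤ,
      (∀ i, y i = A.mulVec x i + (q' : ℤ) * v i) ∧
      (∀ i, 2 * |v i| ≤ (n : ℤ) * β + 1) := by
  have hq0 : (0:ℤ) < (q' : ℤ) := by exact_mod_cast Nat.lt_of_lt_of_le (by norm_num) hq'
  have key : ∀ i, 2 * |A.mulVec x i| ≤ (n:ℤ) * (((q':ℤ)-1) * β) := by
    intro i
    have h1 : |A.mulVec x i| ≤ ∑ j, |A i j * x j| := by
      simpa [Matrix.mulVec, dotProduct] using
        Finset.abs_sum_le_sum_abs (fun j => A i j * x j) Finset.univ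
    have h2 : ∑ j, 2 * |A i j * x j| ≤ ∑ _j : Fin n, ((q':ℤ)-1) * β := by
      apply Finset.sum_le_sum; intro j _
      rw [abs_mul]
      calc 2 * (|A i j| * |x j|) = (2*|A i j|) * |x j| := by ring
      _ ≤ ((q':ℤ)-1) * β := mul_le_mul (hA i j) (hx j) (abs_nonneg _) (by linarith)
    have h3 : ∑ j, 2 * |A i j * x j| = 2 * ∑ j, |A i j * x j| := by
      rw [Finset.mul_sum]
    have h4 : ∑ _j : Fin n, ((q':ℤ)-1) * β = (n:ℤ) * (((q':ℤ)-1) * β) := by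
      simp [Finset.sum_const, nsmul_eq_mul]
    linarith [h1, h2, h3.symm ▸ h2]
  refine ⟨fun i => (y i - A.mulVec x i) / (q':ℤ), fun i => ?_, fun i => ?_⟩
  · have hv : (q':ℤ) * ((y i - A.mulVec x i) / (q':ℤ)) = y i - A.mulVec x i :=
      Int.mul_ediv_cancel' (hcong i)
    linarith
  · have hv : (q':ℤ) * ((y i - A.mulVec x i) / (q':ℤ)) = y i - A.mulVec x i :=
      Int.mul_ediv_cancel' (hcong i)
    have hnb : (0:ℤ) ≤ (n:ℤ) * β := mul_nonneg (Nat.cast_nonneg n) (by linarith)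
    have h3 : 2 * |y i - A.mulVec x i| ≤ ((q':ℤ)-1) * ((n:ℤ)*β+1) := by
      have := abs_sub (y i) (A.mulVec x i)
      have := key i
      have := hy i
      nlinarith [abs_sub (y i) (A.mulVec x i)]
    rw [← hv, abs_mul, abs_of_pos hq0] at h3
    have h5 : (q':ℤ) * (2 * |(y i - A.mulVec x i) / (q':ℤ)|) ≤ (q':ℤ) * ((n:ℤ)*β+1) := by
      nlinarith [abs_nonneg ((y i - A.mulVec x i) / (q':ℤ))]
    exact le_of_mul_le_mul_left h5 hq0
end

section
/- Let q' ≥ 2, q > q'(nβ+1), and suppose A ∈ ℤ^{m×n} has entries of absolute value at most (q'-1)/2, y ∈ ℤ^m has entries of absolute value at most (q'-1)/2, x ∈ ℤ^n satisfies ‖x‖_∞ ≤ β, and v ∈ ℤ^m satisfies ‖v‖_∞ ≤ (nβ+1)/2. Then y = A·x + q'·v holds over ℤ if and only if y ≡ A·x + q'·v (mod q). -/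
/-- When `q > q'(nβ+1)`, an exact integer equation with bounded terms is
    equivalent to the same equation modulo `q`. -/
theorem exact_iff_mod_large_modulus (q q' : ℕ) (hq' : 2 ≤ q') (m n : ℕ) (β : ℤ)
    (hq : (q : ℤ) > (q' : ℤ) * ((n : ℤ) * β + 1))
    (A : Matrix (Fin m) (Fin n) ℤ) (y : Fin m → ℤ) (x : Fin n → ℤ) (v : Fin m → ℤ)
    (hA : ∀ i j, 2 * |A i j| ≤ (q' : ℤ) - 1)
    (hy : ∀ i, 2 * |y i| ≤ (q' : ℤ) - 1)
    (hx : ∀ j, |x j| ≤ β)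
    (hv : ∀ i, 2 * |v i| ≤ (n : ℤ) * β + 1) :
    (∀ i, y i = A.mulVec x i + (q' : ℤ) * v i) ↔
      (∀ i, (q : ℤ) ∣ (y i - (A.mulVec x i + (q' : ℤ) * v i))) := by
  constructor
  · intro h i; rw [h i]; simp
  · intro h i
    have hq'1 : (1 : ℤ) ≤ (q' : ℤ) - 1 := by
      have : (2 : ℤ) ≤ (q' : ℤ) := by exact_mod_cast hq'
      linarith
    -- bound on mulVec
    have hmv : 2 * |A.mulVec x i| ≤ (n : ℤ) * ((q' : ℤ) - 1) * β := by
      have h1 : |A.mulVec x i| ≤ ∑ j, |A i j * x j| := by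
        simpa [Matrix.mulVec, dotProduct] using
          Finset.abs_sum_le_sum_abs (fun j => A i j * x j) Finset.univ
      have h2 : ∀ j : Fin n, 2 * |A i j * x j| ≤ ((q' : ℤ) - 1) * β := by
        intro j
        rw [abs_mul, ← mul_assoc]
        exact mul_le_mul (hA i j) (hx j) (abs_nonneg _) (by linarith)
      calc 2 * |A.mulVec x i| ≤ 2 * ∑ j, |A i j * x j| := by linarith
        _ = ∑ j : Fin n, 2 * |A i j * x j| := by rw [Finset.mul_sum]
        _ ≤ ∑ j : Fin n, ((q' : ℤ) - 1) * β := Finset.sum_le_sum (fun j _ => h2 j)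
        _ = (n : ℤ) * (((q' : ℤ) - 1) * β) := by simp [mul_comm]
        _ = (n : ℤ) * ((q' : ℤ) - 1) * β := by ring
    have hqv : 2 * |(q' : ℤ) * v i| ≤ (q' : ℤ) * ((n : ℤ) * β + 1) := by
      have hq'pos : (0 : ℤ) ≤ (q' : ℤ) := by positivity
      rw [abs_mul, abs_of_nonneg hq'pos]
      calc 2 * ((q' : ℤ) * |v i|) = (q' : ℤ) * (2 * |v i|) := by ring
        _ ≤ (q' : ℤ) * ((n : ℤ) * β + 1) := by
            exact mul_le_mul_of_nonneg_left (hv i) hq'pos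
    have hd : |y i - (A.mulVec x i + (q' : ℤ) * v i)| < (q : ℤ) := by
      have h1 := hy i
      have h2 := abs_sub_abs_le_abs_sub (y i) (A.mulVec x i + (q' : ℤ) * v i)
      have h3 : |y i - (A.mulVec x i + (q' : ℤ) * v i)| ≤
          |y i| + |A.mulVec x i| + |(q' : ℤ) * v i| := by
        calc |y i - (A.mulVec x i + (q' : ℤ) * v i)|
            ≤ |y i| + |A.mulVec x i + (q' : ℤ) * v i| := abs_sub _ _
          _ ≤ |y i| + (|A.mulVec x i| + |(q' : ℤ) * v i|) := by
              linarith [abs_add_le (A.mulVec x i) ((q' : ℤ) * v i)]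
          _ = |y i| + |A.mulVec x i| + |(q' : ℤ) * v i| := by ring
      -- combine: 2|d| ≤ (q'-1) + n(q'-1)β + q'(nβ+1) = (2q'-1)(nβ+1) < 2q
      nlinarith [hmv, hqv, h1, h3]
    have := Int.eq_zero_of_abs_lt_dvd (h i) hd
    linarith [this]
end

section
/- For a full-rank lattice ℒ ⊂ ℤ^n and σ > 0, if v is sampled from the discrete Gaussian distribution D_{ℒ,σ}, then Pr[‖v‖₂ > σ·√n] ≤ 2^{-2n}. -/
open scoped ENNReal
open Module

/-!
Write `ρ_s(v) = exp (-s ‖v‖²)` and `m = rank L ≤ n`. Grouping the points of `L` by their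
coordinates modulo 2 in a basis of `L` gives `2 ^ m` classes, and any two points of one class
are `a + b` and `a - b` for some `a, b ∈ L`. The parallelogram law
`ρ_{s/2}(a + b) ρ_{s/2}(a - b) = ρ_s(a) ρ_s(b)` and Cauchy–Schwarz over the classes then give
`ρ_{s/2}(L)² ≤ 2 ^ m ρ_s(L)²`, hence `ρ_{s/4}(L) ≤ 2 ^ m ρ_s(L)`. For `s = π / σ²` and
`‖v‖² ≥ σ² n` one has `ρ_s(v) ≤ e^{-3πn/4} ρ_{s/4}(v)`, so the tail has mass at most
`e^{-3πn/4} 2 ^ n ρ_s(L) ≤ 2 ^ {-2n} ρ_s(L)`, because `e^{3π/4} ≥ 8`.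
-/

namespace ENNReal

theorem sq_sum_le_card_mul_sum_sq {ι : Type*} (s : Finset ι) (f : ι → ℝ≥0∞) :
    (∑ i ∈ s, f i) ^ 2 ≤ s.card * ∑ i ∈ s, f i ^ 2 := by
  have := rpow_sum_le_const_mul_sum_rpow (p := 2) s f one_le_two
  norm_num at this
  exact_mod_cast this

theorem sq_tsum_le_card_mul_sq_tsum {G H : Type*} [AddCommGroup G] [Fintype H]
    (par : G → H) (hpar : ∀ c d, par c = par d → ∃ b, c - d = b + b) {f g : G → ℝ≥0∞}
    (hfg : ∀ a b, f (a + b) * f (a - b) ≤ g a * g b) :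
    (∑' x, f x) ^ 2 ≤ Fintype.card H * (∑' x, g x) ^ 2 := by
  set A : H → ℝ≥0∞ := fun h => ∑' c : par ⁻¹' {h}, f c
  have hfiberwise (F : G → ℝ≥0∞) : ∑ h, ∑' c : par ⁻¹' {h}, F c = ∑' c, F c := by
    rw [← tsum_fiberwise F par, tsum_fintype]
  have hfiber (c : G) : A (par c) ≤ ∑' b, f (c - (b + b)) := by
    choose half hhalf using fun d : par ⁻¹' {par c} => hpar c d d.2.symm
    calc A (par c) = ∑' d : par ⁻¹' {par c}, f (c - (half d + half d)) :=
          tsum_congr fun d => by rw [← hhalf, _root_.sub_sub_cancel]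
      _ ≤ ∑' b, f (c - (b + b)) := by
          refine tsum_comp_le_tsum_of_injective (fun d d' h => Subtype.ext ?_) _
          rw [← _root_.sub_sub_cancel c d, hhalf, h, ← hhalf, _root_.sub_sub_cancel]
  have hsq : ∑ h, A h ^ 2 ≤ (∑' x, g x) ^ 2 := calc
    ∑ h, A h ^ 2 = ∑ h, ∑' c : par ⁻¹' {h}, f c * A (par c) := by
        refine Finset.sum_congr rfl fun h _ => ?_
        rw [sq, ← ENNReal.tsum_mul_right]
        exact tsum_congr fun c => by rw [c.2]
    _ = ∑' c, f c * A (par c) := hfiberwise fun c => f c * A (par c)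
    _ ≤ ∑' c, ∑' b, f c * f (c - (b + b)) := by
        gcongr with c
        rw [ENNReal.tsum_mul_left]
        gcongr
        exact hfiber c
    _ = ∑' b, ∑' a, f (a + b) * f (a - b) := by
        rw [ENNReal.tsum_comm]
        refine tsum_congr fun b => ?_
        rw [← (Equiv.addRight b).tsum_eq]
        simp only [Equiv.coe_addRight, add_sub_add_right_eq_sub]
    _ ≤ ∑' b, ∑' a, g a * g b :=
        ENNReal.tsum_le_tsum fun b => ENNReal.tsum_le_tsum fun a => hfg a b
    _ = (∑' x, g x) ^ 2 := by simp only [ENNReal.tsum_mul_right, ENNReal.tsum_mul_left, sq]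
  calc (∑' x, f x) ^ 2 = (∑ h, A h) ^ 2 := by rw [hfiberwise]
    _ ≤ Fintype.card H * ∑ h, A h ^ 2 := sq_sum_le_card_mul_sum_sq Finset.univ A
    _ ≤ Fintype.card H * (∑' x, g x) ^ 2 := by gcongr

theorem tsum_fin_pi_prod_eq_pow {α : Type*} (h : α → ℝ≥0∞) (n : ℕ) :
    ∑' x : Fin n → α, ∏ i, h (x i) = (∑' a, h a) ^ n := by
  induction n with
  | zero => simp
  | succ n ih =>
    rw [← (Fin.consEquiv fun _ => α).tsum_eq, ENNReal.tsum_prod', pow_succ', ← ih,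
      ← ENNReal.tsum_mul_right]
    refine tsum_congr fun a => ?_
    rw [← ENNReal.tsum_mul_left]
    exact tsum_congr fun x => by simp [Fin.consEquiv, Fin.prod_univ_succ]

end ENNReal

theorem Module.Basis.exists_sub_eq_add_self_of_intCast_eq {M κ : Type*} [AddCommGroup M]
    [Fintype κ] (b : Basis κ ℤ M) {c d : M}
    (h : (fun i => (b.equivFun c i : ZMod 2)) = fun i => (b.equivFun d i : ZMod 2)) :
    ∃ e, c - d = e + e := by
  refine ⟨b.equivFun.symm fun i => (b.equivFun c i - b.equivFun d i) / 2, ?_⟩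
  apply b.equivFun.injective
  funext i
  have hdvd := (ZMod.intCast_eq_intCast_iff_dvd_sub _ _ 2).mp (congrFun h i)
  simp only [map_sub, map_add, LinearEquiv.apply_symm_apply, Pi.sub_apply, Pi.add_apply]
  omega

theorem eight_le_exp_three_pi_div_four : 8 ≤ Real.exp (3 * Real.pi / 4) := by
  have hx : 2.355 ≤ 3 * Real.pi / 4 := by linarith [Real.pi_gt_d2]
  have htaylor := Real.sum_le_exp_of_nonneg (by linarith : 0 ≤ 3 * Real.pi / 4) 4
  norm_num [Finset.sum_range_succ, Nat.factorial] at htaylor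
  nlinarith

theorem exp_neg_three_pi_div_four_mul_two_pow_le {m n : ℕ} (hmn : m ≤ n) :
    Real.exp (-(3 * Real.pi / 4 * n)) * 2 ^ m ≤ 2 ^ (-(2 * (n : ℤ))) := by
  have hexp : Real.exp (-(3 * Real.pi / 4 * n)) ≤ (1 / 8) ^ n := by
    rw [show -(3 * Real.pi / 4 * n) = n * -(3 * Real.pi / 4) by ring, Real.exp_nat_mul,
      Real.exp_neg, one_div]
    gcongr
    exact eight_le_exp_three_pi_div_four
  calc Real.exp (-(3 * Real.pi / 4 * n)) * 2 ^ m ≤ (1 / 8) ^ n * 2 ^ n := by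
        gcongr
        exact one_le_two
    _ = 2 ^ (-(2 * (n : ℤ))) := by
        rw [← mul_pow, zpow_neg, mul_comm, zpow_mul, zpow_natCast, ← inv_pow]
        norm_num

section GaussianWeight

variable {n : ℕ}

noncomputable def gaussianWeight (s : ℝ) (v : Fin n → ℤ) : ℝ≥0∞ :=
  ENNReal.ofReal (Real.exp (-(s * ∑ i, ((v i : ℤ) : ℝ) ^ 2)))

theorem gaussianWeight_half_add_mul_half_sub (s : ℝ) (a b : Fin n → ℤ) :
    gaussianWeight (s / 2) (a + b) * gaussianWeight (s / 2) (a - b) =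
      gaussianWeight s a * gaussianWeight s b := by
  simp only [gaussianWeight, ← ENNReal.ofReal_mul (Real.exp_pos _).le, ← Real.exp_add]
  congr 2
  simp only [Pi.add_apply, Pi.sub_apply, Int.cast_add, Int.cast_sub, Finset.mul_sum,
    ← Finset.sum_neg_distrib, ← Finset.sum_add_distrib]
  exact Finset.sum_congr rfl fun i _ => by ring

theorem gaussianWeight_le_of_le_sum_sq {s r : ℝ} (hs : 0 ≤ s) {v : Fin n → ℤ}
    (hv : r ≤ ∑ i, ((v i : ℤ) : ℝ) ^ 2) :
    gaussianWeight s v ≤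
      ENNReal.ofReal (Real.exp (-(3 / 4 * s * r))) * gaussianWeight (s / 4) v := by
  rw [gaussianWeight, gaussianWeight, ← ENNReal.ofReal_mul (Real.exp_pos _).le, ← Real.exp_add]
  gcongr
  nlinarith

theorem tsum_gaussianWeight_ne_top {s : ℝ} (hs : 0 < s) :
    ∑' v : Fin n → ℤ, gaussianWeight s v ≠ ⊤ := by
  have hsummable : Summable fun k : ℤ => Real.exp (-(s * (k : ℝ) ^ 2)) := by
    refine (summable_pow_mul_jacobiTheta₂_term_bound 0 (T := s / Real.pi) (by positivity) 0).congr
      fun k => ?_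
    field_simp
    ring_nf
  have hprod (v : Fin n → ℤ) :
      gaussianWeight s v = ∏ i, ENNReal.ofReal (Real.exp (-(s * ((v i : ℤ) : ℝ) ^ 2))) := by
    rw [gaussianWeight, ← ENNReal.ofReal_prod_of_nonneg fun i _ => (Real.exp_pos _).le,
      ← Real.exp_sum, Finset.mul_sum, Finset.sum_neg_distrib]
  simp_rw [hprod, ENNReal.tsum_fin_pi_prod_eq_pow fun k : ℤ =>
    ENNReal.ofReal (Real.exp (-(s * (k : ℝ) ^ 2)))]
  rw [← ENNReal.ofReal_tsum_of_nonneg (fun _ => (Real.exp_pos _).le) hsummable]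
  exact ENNReal.pow_ne_top ENNReal.ofReal_ne_top

theorem sq_tsum_gaussianWeight_half_le (L : Submodule ℤ (Fin n → ℤ)) (s : ℝ) :
    (∑' x : L, gaussianWeight (s / 2) (x : Fin n → ℤ)) ^ 2 ≤
      2 ^ finrank ℤ L * (∑' x : L, gaussianWeight s (x : Fin n → ℤ)) ^ 2 := by
  let b := Free.chooseBasis ℤ L
  have hbound := ENNReal.sq_tsum_le_card_mul_sq_tsum
    (fun x : L => fun i => (b.equivFun x i : ZMod 2))
    (fun _ _ h => b.exists_sub_eq_add_self_of_intCast_eq h)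
    (f := fun x : L => gaussianWeight (s / 2) (x : Fin n → ℤ))
    (g := fun x : L => gaussianWeight s (x : Fin n → ℤ)) fun x y => by
      rw [Submodule.coe_add, Submodule.coe_sub]
      exact (gaussianWeight_half_add_mul_half_sub s (x : Fin n → ℤ) (y : Fin n → ℤ)).le
  rwa [Fintype.card_fun, ZMod.card, Nat.cast_pow, Nat.cast_ofNat,
    ← finrank_eq_card_chooseBasisIndex] at hbound

theorem tsum_gaussianWeight_quarter_le (L : Submodule ℤ (Fin n → ℤ)) (s : ℝ) :
    ∑' x : L, gaussianWeight (s / 4) (x : Fin n → ℤ) ≤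
      2 ^ finrank ℤ L * ∑' x : L, gaussianWeight s (x : Fin n → ℤ) := by
  rw [← ENNReal.pow_le_pow_left_iff two_ne_zero]
  calc (∑' x : L, gaussianWeight (s / 4) (x : Fin n → ℤ)) ^ 2
      = (∑' x : L, gaussianWeight (s / 2 / 2) (x : Fin n → ℤ)) ^ 2 := by norm_num [div_div]
    _ ≤ 2 ^ finrank ℤ L * (∑' x : L, gaussianWeight (s / 2) (x : Fin n → ℤ)) ^ 2 :=
        sq_tsum_gaussianWeight_half_le L (s / 2)
    _ ≤ 2 ^ finrank ℤ L *
          (2 ^ finrank ℤ L * (∑' x : L, gaussianWeight s (x : Fin n → ℤ)) ^ 2) := by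
        gcongr
        exact sq_tsum_gaussianWeight_half_le L s
    _ = (2 ^ finrank ℤ L * ∑' x : L, gaussianWeight s (x : Fin n → ℤ)) ^ 2 := by ring

theorem tsum_gaussianWeight_tail_le (L : Submodule ℤ (Fin n → ℤ)) {s r : ℝ} (hs : 0 ≤ s)
    (P : (Fin n → ℤ) → Prop) (hP : ∀ v, P v → v ∈ L ∧ r ≤ ∑ i, ((v i : ℤ) : ℝ) ^ 2) :
    ∑' v : {v // P v}, gaussianWeight s (v : Fin n → ℤ) ≤
      ENNReal.ofReal (Real.exp (-(3 / 4 * s * r))) *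
        (2 ^ finrank ℤ L * ∑' x : L, gaussianWeight s (x : Fin n → ℤ)) := calc
  _ ≤ ∑' v : {v // P v},
        ENNReal.ofReal (Real.exp (-(3 / 4 * s * r))) * gaussianWeight (s / 4) (v : Fin n → ℤ) :=
      ENNReal.tsum_le_tsum fun v => gaussianWeight_le_of_le_sum_sq hs (hP v v.2).2
  _ = ENNReal.ofReal (Real.exp (-(3 / 4 * s * r))) *
        ∑' v : {v // P v}, gaussianWeight (s / 4) (v : Fin n → ℤ) :=
      ENNReal.tsum_mul_left
  _ ≤ ENNReal.ofReal (Real.exp (-(3 / 4 * s * r))) *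
        ∑' x : L, gaussianWeight (s / 4) (x : Fin n → ℤ) := by
      gcongr
      exact ENNReal.tsum_comp_le_tsum_of_injective
        (f := fun v : {v // P v} => (⟨v, (hP v v.2).1⟩ : L))
        (fun v w h => Subtype.ext (by simpa using congrArg Subtype.val h))
        fun x : L => gaussianWeight (s / 4) (x : Fin n → ℤ)
  _ ≤ _ := by
      gcongr
      exact tsum_gaussianWeight_quarter_le L s

end GaussianWeight

theorem discrete_gaussian_tail_bound_general (n : ℕ) (L : Submodule ℤ (Fin n → ℤ)) (σ : ℝ)
    (hσ : 0 < σ) :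
    (∑' x : {v : Fin n → ℤ //
        v ∈ L ∧ σ * Real.sqrt n < Real.sqrt (∑ i, ((v i : ℤ) : ℝ) ^ 2)},
      Real.exp (-(Real.pi * (∑ i, (((x : Fin n → ℤ) i : ℤ) : ℝ) ^ 2) / σ ^ 2))) ≤
    (2 : ℝ) ^ (-(2 * (n : ℤ))) *
      ∑' x : L,
        Real.exp (-(Real.pi * (∑ i, (((x : Fin n → ℤ) i : ℤ) : ℝ) ^ 2) / σ ^ 2)) := by
  set s := Real.pi / σ ^ 2 with hs_def
  have hs : 0 < s := by positivity
  have hweight (v : Fin n → ℤ) : Real.exp (-(Real.pi * (∑ i, ((v i : ℤ) : ℝ) ^ 2) / σ ^ 2)) =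
      (gaussianWeight s v).toReal := by
    rw [gaussianWeight, ENNReal.toReal_ofReal (Real.exp_pos _).le, hs_def, div_mul_eq_mul_div]
  have hL : ∑' x : L, gaussianWeight s (x : Fin n → ℤ) ≠ ⊤ :=
    ne_top_of_le_ne_top (tsum_gaussianWeight_ne_top hs)
      (ENNReal.tsum_comp_le_tsum_of_injective Subtype.val_injective _)
  have htail := tsum_gaussianWeight_tail_le L hs.le (r := σ ^ 2 * n)
    (fun v => v ∈ L ∧ σ * Real.sqrt n < Real.sqrt (∑ i, ((v i : ℤ) : ℝ) ^ 2)) fun v hv => by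
      refine ⟨hv.1, le_of_lt ?_⟩
      have := (Real.lt_sqrt (by positivity)).mp hv.2
      rwa [mul_pow, Real.sq_sqrt n.cast_nonneg] at this
  have hexp : Real.exp (-(3 / 4 * s * (σ ^ 2 * n))) = Real.exp (-(3 * Real.pi / 4 * n)) := by
    rw [hs_def]
    field_simp
  simp_rw [hweight]
  rw [← ENNReal.tsum_toReal_eq fun _ => by simp [gaussianWeight],
    ← ENNReal.tsum_toReal_eq fun _ => by simp [gaussianWeight]]
  calc _ ≤ _ := ENNReal.toReal_mono (by finiteness) htail
    _ = Real.exp (-(3 * Real.pi / 4 * n)) * 2 ^ finrank ℤ L *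
          (∑' x : L, gaussianWeight s (x : Fin n → ℤ)).toReal := by
        rw [ENNReal.toReal_mul, ENNReal.toReal_mul, ENNReal.toReal_ofReal (Real.exp_pos _).le,
          hexp, ENNReal.toReal_pow, ENNReal.toReal_ofNat, mul_assoc]
    _ ≤ _ := by
        gcongr
        exact exp_neg_three_pi_div_four_mul_two_pow_le
          ((Submodule.finrank_le L).trans_eq (finrank_fin_fun ℤ))

/-- Banaszczyk's tail bound: for a full-rank lattice `L ⊆ ℤ^n` and the discrete
    Gaussian `D_{L,σ}` (probability of `x` proportional to `exp(-π‖x‖²/σ²)`),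
    the probability that `‖v‖₂ > σ√n` is at most `2^{-2n}`. -/
theorem discrete_gaussian_tail_bound (n : ℕ) (L : Submodule ℤ (Fin n → ℤ)) (σ : ℝ)
    (hσ : 0 < σ)
    (hfull : Submodule.span ℝ
        ((fun (x : Fin n → ℤ) (i : Fin n) => ((x i : ℤ) : ℝ)) ''
          (L : Set (Fin n → ℤ))) = ⊤) :
    (∑' x : {v : Fin n → ℤ //
        v ∈ L ∧ σ * Real.sqrt n < Real.sqrt (∑ i, ((v i : ℤ) : ℝ) ^ 2)},
      Real.exp (-(Real.pi * (∑ i, (((x : Fin n → ℤ) i : ℤ) : ℝ) ^ 2) / σ ^ 2))) ≤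
    (2 : ℝ) ^ (-(2 * (n : ℤ))) *
      ∑' x : L,
        Real.exp (-(Real.pi * (∑ i, (((x : Fin n → ℤ) i : ℤ) : ℝ) ^ 2) / σ ^ 2)) :=
  discrete_gaussian_tail_bound_general n L σ hσ
end
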